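/- Let G be a connected graph of order n containing two non-adjacent vertices x and y, each of degree at least 3, with |N(x) ∩ N(y)| ≤ 1. Then γ_{StR}(G) ≤ n − 2. -/

import Mathlib

/-!
Put weight 2 on `x` and `y`, weight 0 on two neighbours of `x` outside `N(y)` and on two
neighbours of `y` outside `N(x)` (they exist because `|N(x) ∩ N(y)| ≤ 1`), and weight 1 on every
other vertex. Each of `x`, `y` sees exactly two zeros, so `1 + ⌈2/2⌉ = 2` suffices, and the
weight is `n + 2 - 4`.
-/

namespace SimpleGraph

variable {V : Type*}

/-- The degree of a vertex (cardinality of its open neighborhood). -/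
noncomputable def deg (G : SimpleGraph V) (v : V) : ℕ := (G.neighborSet v).ncard

/-- Maximum degree. -/
noncomputable def maxDeg [Fintype V] (G : SimpleGraph V) : ℕ :=
  Finset.univ.sup fun v => G.deg v

/-- A strong Roman dominating function: `f : V → {0,1,...,⌈Δ/2⌉+1}` such that every vertex
with value 0 has a neighbor `w` with `f w ≥ 2` and `f w ≥ 1 + ⌈|N(w) ∩ B₀|/2⌉`. -/
def IsStRDF [Fintype V] (G : SimpleGraph V) (f : V → ℕ) : Prop :=
  (∀ v, f v ≤ (G.maxDeg + 1) / 2 + 1) ∧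
  ∀ v, f v = 0 → ∃ w, G.Adj v w ∧ 2 ≤ f w ∧
    1 + ((G.neighborSet w ∩ {u | f u = 0}).ncard + 1) / 2 ≤ f w

/-- The strong Roman domination number. -/
noncomputable def gammaStR [Fintype V] (G : SimpleGraph V) : ℕ :=
  sInf {k | ∃ f, G.IsStRDF f ∧ ∑ v, f v = k}

/-- A Roman dominating function. -/
def IsRDF (G : SimpleGraph V) (f : V → ℕ) : Prop :=
  (∀ v, f v ≤ 2) ∧ ∀ v, f v = 0 → ∃ w, G.Adj v w ∧ f w = 2

/-- The Roman domination number. -/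
noncomputable def gammaR [Fintype V] (G : SimpleGraph V) : ℕ :=
  sInf {k | ∃ f, G.IsRDF f ∧ ∑ v, f v = k}

/-- A dominating set. -/
def IsDomSet (G : SimpleGraph V) (D : Set V) : Prop :=
  ∀ v ∉ D, ∃ w ∈ D, G.Adj v w

/-- The domination number. -/
noncomputable def gammaDom [Fintype V] (G : SimpleGraph V) : ℕ :=
  sInf {k | ∃ D : Set V, G.IsDomSet D ∧ D.ncard = k}

end SimpleGraph

namespace SimpleGraph

variable {V : Type*}

open Classical in
/-- The function written `(V₀, V₁, V₂)` in Roman domination, with `V₁` the remaining vertices. -/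
noncomputable def romanFun (V₀ V₂ : Set V) (v : V) : ℕ :=
  if v ∈ V₂ then 2 else if v ∈ V₀ then 0 else 1

theorem romanFun_le_two (V₀ V₂ : Set V) (v : V) : romanFun V₀ V₂ v ≤ 2 := by
  unfold romanFun; split_ifs <;> omega

theorem romanFun_eq_two {V₀ V₂ : Set V} {v : V} (hv : v ∈ V₂) : romanFun V₀ V₂ v = 2 := by
  simp [romanFun, hv]

theorem romanFun_eq_zero_iff {V₀ V₂ : Set V} (hdisj : Disjoint V₀ V₂) {v : V} :
    romanFun V₀ V₂ v = 0 ↔ v ∈ V₀ := by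
  by_cases h₂ : v ∈ V₂
  · simp [romanFun, h₂, hdisj.notMem_of_mem_right h₂]
  · by_cases h₀ : v ∈ V₀ <;> simp [romanFun, h₂, h₀]

theorem sum_romanFun_add_ncard [Fintype V] {V₀ V₂ : Set V} (hdisj : Disjoint V₀ V₂) :
    ∑ v, romanFun V₀ V₂ v + V₀.ncard = Fintype.card V + V₂.ncard := by
  classical
  have hpoint : ∀ v, romanFun V₀ V₂ v + (if v ∈ V₀ then 1 else 0) = 1 + (if v ∈ V₂ then 1 else 0) :=
    fun v => by
      by_cases h₂ : v ∈ V₂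
      · simp [romanFun, h₂, hdisj.notMem_of_mem_right h₂]
      · by_cases h₀ : v ∈ V₀ <;> simp [romanFun, h₂, h₀]
  have hcard : ∀ s : Set V, s.ncard = ∑ v, if v ∈ s then 1 else 0 := fun s => by
    rw [Finset.sum_boole, Nat.cast_id, Set.ncard_eq_toFinset_card', Set.toFinset_card,
      Fintype.card_subtype]
  rw [hcard, hcard, ← Finset.sum_add_distrib, Finset.sum_congr rfl fun v _ => hpoint v,
    Finset.sum_add_distrib, Finset.sum_const, smul_eq_mul, mul_one, Finset.card_univ]

theorem deg_le_maxDeg [Fintype V] (G : SimpleGraph V) (v : V) : G.deg v ≤ G.maxDeg :=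
  Finset.le_sup (f := G.deg) (Finset.mem_univ v)

/-- `⌈Δ/2⌉ + 1 ≥ 2` exactly when `Δ ≥ 1`, and `1 + ⌈c/2⌉ ≤ 2` exactly when `c ≤ 2`. -/
theorem isStRDF_romanFun [Fintype V] {G : SimpleGraph V} (hΔ : 1 ≤ G.maxDeg) {V₀ V₂ : Set V}
    (hdisj : Disjoint V₀ V₂)
    (hdom : ∀ v ∈ V₀, ∃ w ∈ V₂, G.Adj v w ∧ (G.neighborSet w ∩ V₀).ncard ≤ 2) :
    G.IsStRDF (romanFun V₀ V₂) := by
  refine ⟨fun v => (romanFun_le_two V₀ V₂ v).trans (by omega), fun v hv => ?_⟩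
  obtain ⟨w, hw, hvw, hzeros⟩ := hdom v ((romanFun_eq_zero_iff hdisj).1 hv)
  have hzeroSet : {u | romanFun V₀ V₂ u = 0} = V₀ := Set.ext fun u => romanFun_eq_zero_iff hdisj
  refine ⟨w, hvw, ?_⟩
  rw [hzeroSet, romanFun_eq_two hw]
  omega

theorem gammaStR_le_sum [Fintype V] {G : SimpleGraph V} {f : V → ℕ} (hf : G.IsStRDF f) :
    G.gammaStR ≤ ∑ v, f v :=
  Nat.sInf_le ⟨f, hf, rfl⟩

theorem exists_ncard_eq_two_subset_neighborSet_diff [Finite V] {G : SimpleGraph V} {x y : V}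
    (hx : 3 ≤ G.deg x) (hN : (G.neighborSet x ∩ G.neighborSet y).ncard ≤ 1) :
    ∃ X ⊆ G.neighborSet x \ G.neighborSet y, X.ncard = 2 := by
  have hsplit := Set.ncard_inter_add_ncard_sdiff_eq_ncard (G.neighborSet x) (G.neighborSet y)
  have htwo : 2 ≤ (G.neighborSet x \ G.neighborSet y).ncard := by unfold deg at hx; omega
  obtain ⟨X, hX, hXcard⟩ := Set.exists_subset_encard_eq (k := 2)
    (by rw [← Set.coe_ncard_eq_encard (G.neighborSet x \ G.neighborSet y)]; exact_mod_cast htwo)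
  exact ⟨X, hX, by rw [Set.ncard_def, hXcard]; rfl⟩

section PrivateNeighbors

variable {G : SimpleGraph V} {x y : V} {X Y : Set V}

theorem disjoint_union_pair_of_subset_neighborSet_diff (hxy : ¬ G.Adj x y)
    (hX : X ⊆ G.neighborSet x \ G.neighborSet y) (hY : Y ⊆ G.neighborSet y \ G.neighborSet x) :
    Disjoint (X ∪ Y) {x, y} := by
  rw [Set.disjoint_left]
  rintro v (hv | hv) (rfl | rfl)
  exacts [(hX hv).1.ne rfl, hxy (hX hv).1, hxy (hY hv).1.symm, (hY hv).1.ne rfl]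

theorem isStRDF_romanFun_of_subset_neighborSet_diff [Fintype V] (hΔ : 1 ≤ G.maxDeg)
    (hxy : ¬ G.Adj x y) (hX : X ⊆ G.neighborSet x \ G.neighborSet y)
    (hY : Y ⊆ G.neighborSet y \ G.neighborSet x) (hXcard : X.ncard ≤ 2) (hYcard : Y.ncard ≤ 2) :
    G.IsStRDF (romanFun (X ∪ Y) {x, y}) := by
  have hXzeros : G.neighborSet x ∩ (X ∪ Y) ⊆ X := fun u ⟨hux, hu⟩ =>
    hu.resolve_right fun huY => (hY huY).2 hux
  have hYzeros : G.neighborSet y ∩ (X ∪ Y) ⊆ Y := fun u ⟨huy, hu⟩ =>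
    hu.resolve_left fun huX => (hX huX).2 huy
  refine isStRDF_romanFun hΔ (disjoint_union_pair_of_subset_neighborSet_diff hxy hX hY) ?_
  rintro v (hv | hv)
  · exact ⟨x, .inl rfl, (hX hv).1.symm, (Set.ncard_le_ncard hXzeros).trans hXcard⟩
  · exact ⟨y, .inr rfl, (hY hv).1.symm, (Set.ncard_le_ncard hYzeros).trans hYcard⟩

end PrivateNeighbors

end SimpleGraph

theorem stmt13_general {V : Type*} [Fintype V] (G : SimpleGraph V)
    (x y : V) (hne : x ≠ y) (hxy : ¬ G.Adj x y) (hx : 3 ≤ G.deg x) (hy : 3 ≤ G.deg y)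
    (hN : (G.neighborSet x ∩ G.neighborSet y).ncard ≤ 1) :
    G.gammaStR ≤ Fintype.card V - 2 := by
  obtain ⟨X, hX, hXcard⟩ := SimpleGraph.exists_ncard_eq_two_subset_neighborSet_diff hx hN
  obtain ⟨Y, hY, hYcard⟩ :=
    SimpleGraph.exists_ncard_eq_two_subset_neighborSet_diff hy (by rwa [Set.inter_comm])
  have hΔ : 1 ≤ G.maxDeg := by have := G.deg_le_maxDeg x; omega
  have hf := SimpleGraph.isStRDF_romanFun_of_subset_neighborSet_diff hΔ hxy hX hY
    hXcard.le hYcard.le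
  have hsum := SimpleGraph.sum_romanFun_add_ncard
    (SimpleGraph.disjoint_union_pair_of_subset_neighborSet_diff hxy hX hY)
  rw [Set.ncard_union_eq (disjoint_sdiff_sdiff.mono hX hY), hXcard, hYcard,
    Set.ncard_pair hne] at hsum
  exact (SimpleGraph.gammaStR_le_sum hf).trans (by omega)

/-- If a connected graph `G` of order `n` has two non-adjacent vertices `x`, `y` of degree
at least 3 with `|N(x) ∩ N(y)| ≤ 1`, then `γ_{StR}(G) ≤ n − 2`. -/
theorem stmt13 {V : Type*} [Fintype V] (G : SimpleGraph V) (hc : G.Connected)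
    (x y : V) (hne : x ≠ y) (hxy : ¬ G.Adj x y) (hx : 3 ≤ G.deg x) (hy : 3 ≤ G.deg y)
    (hN : (G.neighborSet x ∩ G.neighborSet y).ncard ≤ 1) :
    G.gammaStR ≤ Fintype.card V - 2 :=
  stmt13_general G x y hne hxy hx hy hN
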